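/- arXiv:2506.08684 — 4 statements merged into one kernel-verified Lean document; each statement's English description precedes it below -/
import Mathlib

section
/- Let H be a complex Hilbert space and let A, B be densely defined operators on H such that the sum A + B (with domain D(A) ∩ D(B)) is densely defined and closable. Let C be a closed, densely defined operator on H such that C is extended by the closure of A + B (i.e., C ⊆ closure(A+B) as graphs) and such that the adjoint C* is extended by the closure of A* + B* (i.e., C* ⊆ closure(A* + B*), in particular A* + B*, with domain D(A*) ∩ D(B*), is assumed closable). Then C equals the closure of A + B. -/
open scoped InnerProductSpace

set_option maxHeartbeats 1000000

local notation "⟪" x ", " y "⟫" => @inner ℂ _ _ x y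

/-- Abstract operator-theoretic content of Lemma 4.1 (sums): let `A`, `B` be densely defined
operators on a complex Hilbert space `H` such that `A + B` (with domain `D(A) ∩ D(B)`) is
densely defined and closable.  If `C` is a closed, densely defined operator with
`C ⊆ closure (A + B)` and `C* ⊆ closure (A* + B*)`, then `C = closure (A + B)`. -/
theorem eq_closure_add_of_le_closure
    {H : Type*} [NormedAddCommGroup H] [InnerProductSpace ℂ H] [CompleteSpace H]
    (A B : H →ₗ.[ℂ] H)
    (hA : Dense (A.domain : Set H)) (hB : Dense (B.domain : Set H))
    (hABdense : Dense (((A + B).domain : Submodule ℂ H) : Set H))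
    (hABclosable : (A + B).IsClosable)
    (C : H →ₗ.[ℂ] H) (hCclosed : C.IsClosed) (hCdense : Dense (C.domain : Set H))
    (hC : C ≤ (A + B).closure)
    (hadjclosable : (A.adjoint + B.adjoint).IsClosable)
    (hCadj : C.adjoint ≤ (A.adjoint + B.adjoint).closure) :
    C = (A + B).closure := by
  refine le_antisymm hC (LinearPMap.le_of_le_graph ?_)
  -- Step 1 of the pairing lemma
  have pair1 : ∀ z : (A.adjoint + B.adjoint).domain,
      ∀ q ∈ closure ((A + B).graph : Set (H × H)),
      ⟪((A.adjoint + B.adjoint) z : H), q.1⟫ = ⟪(z : H), q.2⟫ := by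
    intro z q hq
    have hcl : IsClosed {q : H × H |
        ⟪((A.adjoint + B.adjoint) z : H), q.1⟫ = ⟪(z : H), q.2⟫} :=
      isClosed_eq (Continuous.inner continuous_const continuous_fst)
        (Continuous.inner continuous_const continuous_snd)
    refine closure_minimal ?_ hcl hq
    rintro ⟨p1, p2⟩ hp
    obtain ⟨u, rfl, rfl⟩ := (A + B).mem_graph_iff'.mp hp
    show ⟪((A.adjoint + B.adjoint) z : H), (u : H)⟫ = ⟪(z : H), ((A + B) u : H)⟫
    rw [LinearPMap.add_apply, LinearPMap.add_apply, inner_add_left, inner_add_right]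
    rw [(A.adjoint_isFormalAdjoint hA) ⟨z, z.2.1⟩ ⟨u, u.2.1⟩,
      (B.adjoint_isFormalAdjoint hB) ⟨z, z.2.2⟩ ⟨u, u.2.2⟩]
  -- Step 2 of the pairing lemma
  have pair : ∀ p ∈ closure ((A.adjoint + B.adjoint).graph : Set (H × H)),
      ∀ q ∈ closure ((A + B).graph : Set (H × H)),
      ⟪p.2, q.1⟫ = ⟪p.1, q.2⟫ := by
    intro p hp q hq
    have hcl : IsClosed {p : H × H | ⟪p.2, q.1⟫ = ⟪p.1, q.2⟫} :=
      isClosed_eq (Continuous.inner continuous_snd continuous_const)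
        (Continuous.inner continuous_fst continuous_const)
    refine closure_minimal ?_ hcl hp
    rintro ⟨p1, p2⟩ hp'
    obtain ⟨z, rfl, rfl⟩ := (A.adjoint + B.adjoint).mem_graph_iff'.mp hp'
    exact pair1 z q hq
  -- Setup the Hilbert space `H ×₂ H` and the relevant closed subspaces
  intro p hp
  -- `hp : p ∈ ((A+B).closure).graph`
  rw [← hABclosable.graph_closure_eq_closure_graph] at hp
  set e : WithLp 2 (H × H) ≃L[ℂ] H × H := WithLp.prodContinuousLinearEquiv 2 ℂ H H with he
  set K : Submodule ℂ (WithLp 2 (H × H)) := C.graph.comap (e : WithLp 2 (H × H) →ₗ[ℂ] H × H)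
    with hK
  have hKclosed : IsClosed (K : Set (WithLp 2 (H × H))) := by
    have : (K : Set (WithLp 2 (H × H))) = e ⁻¹' (C.graph : Set (H × H)) := rfl
    rw [this]
    exact hCclosed.preimage e.continuous
  haveI : CompleteSpace K := hKclosed.completeSpace_coe
  set q : WithLp 2 (H × H) := e.symm p with hq
  set k : K := K.orthogonalProjectionOnto q with hk
  set r : WithLp 2 (H × H) := q - (k : WithLp 2 (H × H)) with hr
  have hrperp : r ∈ Kᗮ := Submodule.sub_starProjection_mem_orthogonal (K := K) q
  -- `e r ∈ closure (graph (A+B))`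
  have hKle : ∀ x : K, e (x : WithLp 2 (H × H)) ∈ closure ((A + B).graph : Set (H × H)) := by
    intro x
    have hx : e (x : WithLp 2 (H × H)) ∈ C.graph := x.2
    have := LinearPMap.le_graph_of_le hC hx
    rwa [← hABclosable.graph_closure_eq_closure_graph] at this
  have hrG : e r ∈ closure ((A + B).graph : Set (H × H)) := by
    have hqG : e q ∈ closure ((A + B).graph : Set (H × H)) := by
      have : e q = p := e.apply_symm_apply p
      rw [this]
      exact hp
    have hkG : e (k : WithLp 2 (H × H)) ∈ closure ((A + B).graph : Set (H × H)) := hKle k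
    have hsub : e r = e q - e (k : WithLp 2 (H × H)) := by rw [hr, map_sub]
    rw [hsub]
    have : IsClosed (closure ((A + B).graph : Set (H × H))) := isClosed_closure
    have hsubmod : closure ((A + B).graph : Set (H × H)) =
        (((A + B).graph.topologicalClosure : Submodule ℂ (H × H)) : Set (H × H)) := rfl
    rw [hsubmod] at hqG hkG ⊢
    exact sub_mem hqG hkG
  -- name the components of `e r`
  set y : H := (e r).1 with hy
  set w : H := (e r).2 with hw
  -- orthogonality gives the adjoint relation
  have horth : ∀ u : C.domain, ⟪y, (u : H)⟫ + ⟪w, C u⟫ = 0 := by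
    intro u
    have hmem : e.symm ((u : H), C u) ∈ K := by
      show e (e.symm ((u : H), C u)) ∈ C.graph
      rw [e.apply_symm_apply]
      exact C.mem_graph u
    have h0 : ⟪r, e.symm ((u : H), C u)⟫ = 0 :=
      (Submodule.mem_orthogonal' K r).mp hrperp _ hmem
    have hinner : ⟪r, e.symm ((u : H), C u)⟫ = ⟪(e r).1, (u : H)⟫ + ⟪(e r).2, C u⟫ := by
      rw [WithLp.prod_inner_apply]
      rfl
    rw [hinner] at h0
    exact h0
  have hwdom : w ∈ C.adjoint.domain := by
    refine C.mem_adjoint_domain_of_exists w ⟨-y, fun u => ?_⟩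
    rw [inner_neg_left]
    linear_combination -horth u
  have hadj_eq : C.adjoint ⟨w, hwdom⟩ = -y := by
    refine LinearPMap.adjoint_apply_eq hCdense ⟨w, hwdom⟩ fun u => ?_
    rw [inner_neg_left]
    linear_combination -horth u
  -- `(w, -y)` is in the closure of the graph of `A† + B†`
  have hwy : ((w : H), -y) ∈ closure ((A.adjoint + B.adjoint).graph : Set (H × H)) := by
    have h1 : ((w : H), C.adjoint ⟨w, hwdom⟩) ∈ C.adjoint.graph := C.adjoint.mem_graph ⟨w, hwdom⟩
    rw [hadj_eq] at h1
    have h2 := LinearPMap.le_graph_of_le hCadj h1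
    rwa [← hadjclosable.graph_closure_eq_closure_graph] at h2
  -- apply the pairing
  have hpair := pair ((w : H), -y) hwy (y, w) hrG
  simp only [inner_neg_left] at hpair
  -- conclude `y = 0` and `w = 0`
  have hsum : ⟪y, y⟫ + ⟪w, w⟫ = 0 := by linear_combination -hpair
  have hy0 : y = 0 ∧ w = 0 := by
    have h1 : RCLike.re (⟪y, y⟫ + ⟪w, w⟫) = 0 := by rw [hsum]; simp
    rw [map_add, inner_self_eq_norm_sq (𝕜 := ℂ), inner_self_eq_norm_sq (𝕜 := ℂ)] at h1
    have key : ∀ a b : H, ‖a‖ ^ 2 + ‖b‖ ^ 2 = 0 → a = 0 ∧ b = 0 := by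
      intro a b hab
      constructor <;> rw [← norm_eq_zero] <;>
        nlinarith [norm_nonneg a, norm_nonneg b, sq_nonneg ‖a‖, sq_nonneg ‖b‖]
    exact key y w h1
  have hr0 : r = 0 := by
    have her : e r = 0 := by
      have : e r = (y, w) := rfl
      rw [this, hy0.1, hy0.2]
      rfl
    have := congrArg e.symm her
    rwa [e.symm_apply_apply, map_zero] at this
  have hqk : q = (k : WithLp 2 (H × H)) := sub_eq_zero.mp hr0
  have : q ∈ K := hqk ▸ k.2
  have : e q ∈ C.graph := this
  rwa [e.apply_symm_apply] at this
end

section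
/- Let h : ℝ³ → ℂ, written h = h(θ, t, s), be a twice continuously differentiable function whose partial derivative h_θ = ∂h/∂θ is nowhere zero. Define X := −h_t / h_θ and Y := −h_s / h_θ (where h_t = ∂h/∂t, h_s = ∂h/∂s). Then at every point, ∂_t Y − ∂_s X = Y · ∂_θ X − X · ∂_θ Y. -/
open ContinuousLinearMap

/-- Quotient rule for the directional derivative of `ℂ`-valued functions. -/
lemma fderiv_div_apply' {E : Type*} [NormedAddCommGroup E] [NormedSpace ℝ E]
    {b a : E → ℂ} {p : E} (hb : DifferentiableAt ℝ b p) (ha : DifferentiableAt ℝ a p)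
    (h0 : a p ≠ 0) (w : E) :
    fderiv ℝ (fun q => b q / a q) p w =
      (fderiv ℝ b p w * a p - b p * fderiv ℝ a p w) / (a p) ^ 2 := by
  have hinv : HasFDerivAt (fun q => (a q)⁻¹)
      ((-mulLeftRight ℝ ℂ (a p)⁻¹ (a p)⁻¹).comp (fderiv ℝ a p)) p :=
    (hasFDerivAt_inv' h0).comp p ha.hasFDerivAt
  have hmul : HasFDerivAt (fun q => b q * (a q)⁻¹)
      (b p • ((-mulLeftRight ℝ ℂ (a p)⁻¹ (a p)⁻¹).comp (fderiv ℝ a p)) +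
        (a p)⁻¹ • fderiv ℝ b p) p :=
    hb.hasFDerivAt.mul hinv
  simp only [div_eq_mul_inv]
  rw [hmul.fderiv]
  simp only [ContinuousLinearMap.add_apply, ContinuousLinearMap.smul_apply,
    ContinuousLinearMap.comp_apply, ContinuousLinearMap.neg_apply, mulLeftRight_apply,
    smul_eq_mul]
  field_simp
  ring

section Helpers
variable {h : ℝ × ℝ × ℝ → ℂ} (hh : ContDiff ℝ 2 h)
include hh

/-- Differentiability of the directional-derivative function. -/
lemma diffD (v : ℝ × ℝ × ℝ) (p : ℝ × ℝ × ℝ) :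
    DifferentiableAt ℝ (fun q => fderiv ℝ h q v) p := by
  have hF : ContDiff ℝ 1 (fderiv ℝ h) := hh.fderiv_right (by norm_num)
  exact (hF.differentiable one_ne_zero p).clm_apply (differentiableAt_const v)

/-- The derivative of the directional-derivative function is the second derivative. -/
lemma fderivD (v w : ℝ × ℝ × ℝ) (p : ℝ × ℝ × ℝ) :
    fderiv ℝ (fun q => fderiv ℝ h q v) p w = fderiv ℝ (fderiv ℝ h) p w v := by
  have hF : ContDiff ℝ 1 (fderiv ℝ h) := hh.fderiv_right (by norm_num)
  rw [fderiv_clm_apply (hF.differentiable one_ne_zero p) (differentiableAt_const v)]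
  simp

/-- Symmetry of second derivatives. -/
lemma symmD (v w : ℝ × ℝ × ℝ) (p : ℝ × ℝ × ℝ) :
    fderiv ℝ (fderiv ℝ h) p v w = fderiv ℝ (fderiv ℝ h) p w v :=
  (hh.contDiffAt.isSymmSndFDerivAt (by norm_num)) v w

end Helpers

/-- The partial derivative of `h : ℝ³ → ℂ` in the direction `v`, at the point `p`. -/
noncomputable def partialD (h : ℝ × ℝ × ℝ → ℂ) (v : ℝ × ℝ × ℝ) (p : ℝ × ℝ × ℝ) : ℂ :=
  fderiv ℝ h p v

/-- `X = -h_t / h_θ`, where the coordinates of `ℝ³` are `(θ, t, s)`. -/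
noncomputable def fieldX (h : ℝ × ℝ × ℝ → ℂ) (p : ℝ × ℝ × ℝ) : ℂ :=
  -partialD h (0, 1, 0) p / partialD h (1, 0, 0) p

/-- `Y = -h_s / h_θ`, where the coordinates of `ℝ³` are `(θ, t, s)`. -/
noncomputable def fieldY (h : ℝ × ℝ × ℝ → ℂ) (p : ℝ × ℝ × ℝ) : ℂ :=
  -partialD h (0, 0, 1) p / partialD h (1, 0, 0) p

/-- **Lemma 5.4.** Let `h = h(θ, t, s)` be a `C²` function `ℝ³ → ℂ` with `h_θ` nowhere zero,
and set `X := -h_t / h_θ`, `Y := -h_s / h_θ`.  Then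
`∂_t Y - ∂_s X = Y ∂_θ X - X ∂_θ Y`, i.e. `Y_t - X_s` is the Witt bracket `[X, Y]`. -/
theorem framing_witt_bracket (h : ℝ × ℝ × ℝ → ℂ) (hh : ContDiff ℝ 2 h)
    (hθ : ∀ p : ℝ × ℝ × ℝ, fderiv ℝ h p (1, 0, 0) ≠ 0) :
    ∀ p : ℝ × ℝ × ℝ,
      partialD (fieldY h) (0, 1, 0) p - partialD (fieldX h) (0, 0, 1) p =
        fieldY h p * partialD (fieldX h) (1, 0, 0) p -
          fieldX h p * partialD (fieldY h) (1, 0, 0) p := by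
  intro p
  set eθ : ℝ × ℝ × ℝ := (1, 0, 0)
  set et : ℝ × ℝ × ℝ := (0, 1, 0)
  set es : ℝ × ℝ × ℝ := (0, 0, 1)
  -- the first-order directional derivatives, as functions
  set a : ℝ × ℝ × ℝ → ℂ := fun q => fderiv ℝ h q eθ with ha_def
  set b : ℝ × ℝ × ℝ → ℂ := fun q => fderiv ℝ h q et with hb_def
  set c : ℝ × ℝ × ℝ → ℂ := fun q => fderiv ℝ h q es with hc_def
  have ha : DifferentiableAt ℝ a p := diffD hh eθ p
  have hb : DifferentiableAt ℝ b p := diffD hh et p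
  have hc : DifferentiableAt ℝ c p := diffD hh es p
  have h0 : a p ≠ 0 := hθ p
  have hXq : fieldX h = fun q => (fun q => -b q) q / a q := by
    funext q; rfl
  have hYq : fieldY h = fun q => (fun q => -c q) q / a q := by
    funext q; rfl
  -- second derivative
  set f2 : (ℝ × ℝ × ℝ) →L[ℝ] (ℝ × ℝ × ℝ) →L[ℝ] ℂ := fderiv ℝ (fderiv ℝ h) p with hf2
  have fa : ∀ w, fderiv ℝ a p w = f2 w eθ := fun w => fderivD hh eθ w p
  have fb : ∀ w, fderiv ℝ b p w = f2 w et := fun w => fderivD hh et w p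
  have fc : ∀ w, fderiv ℝ c p w = f2 w es := fun w => fderivD hh es w p
  have fnb : ∀ w, fderiv ℝ (fun q => -b q) p w = -f2 w et := by
    intro w
    rw [fderiv_fun_neg]
    simp [fb w]
  have fnc : ∀ w, fderiv ℝ (fun q => -c q) p w = -f2 w es := by
    intro w
    rw [fderiv_fun_neg]
    simp [fc w]
  have keyX : ∀ w, partialD (fieldX h) w p =
      ((-f2 w et) * a p - (-b p) * f2 w eθ) / (a p) ^ 2 := by
    intro w
    show fderiv ℝ (fieldX h) p w = _
    rw [hXq, fderiv_div_apply' (b := fun q => -b q) hb.neg ha h0 w, fnb w, fa w]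
  have keyY : ∀ w, partialD (fieldY h) w p =
      ((-f2 w es) * a p - (-c p) * f2 w eθ) / (a p) ^ 2 := by
    intro w
    show fderiv ℝ (fieldY h) p w = _
    rw [hYq, fderiv_div_apply' (b := fun q => -c q) hc.neg ha h0 w, fnc w, fa w]
  have hX : fieldX h p = -b p / a p := rfl
  have hY : fieldY h p = -c p / a p := rfl
  rw [keyX es, keyX eθ, keyY et, keyY eθ, hX, hY]
  have s1 : f2 et es = f2 es et := symmD hh et es p
  have s2 : f2 eθ et = f2 et eθ := symmD hh eθ et p
  have s3 : f2 eθ es = f2 es eθ := symmD hh eθ es p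
  field_simp
  ring_nf
  rw [s1, s2, s3]
  ring
end

section
/- Let X be a complex Banach space and Y ⊆ X a Banach space that is continuously and densely embedded in X. Let U and U′ be evolution systems on X indexed by 0 ≤ s ≤ t ≤ 1 (i.e., U(s,s) = I, U(t,r)U(r,s) = U(t,s) for s ≤ r ≤ t, and (t,s) ↦ U(t,s)x is continuous for each x ∈ X, and likewise for U′). Let A, A′ : [0,1] → B(Y, X) be continuous families of operators (each A(t), A′(t) bounded from Y to X). Assume: (1) M₀ := sup ‖U′(t,s)‖_{X→X} < ∞; (2) each U(t,s) maps Y into Y with M₁ := sup ‖U(t,s)‖_{Y→Y} < ∞, and for each v ∈ Y the map (t,s) ↦ U(t,s)v is continuous into Y; (3) for every v ∈ Y, ∂_t U(t,s)v = A(t)U(t,s)v and ∂_s U′(t,s)v = −U′(t,s)A′(s)v, the derivatives taken in the norm of X. Then for all v ∈ Y and 0 ≤ a ≤ b ≤ 1, U′(b,a)v − U(b,a)v = ∫_a^b U′(b,x)[A′(x) − A(x)]U(x,a)v dx (the integrand being a continuous X-valued function of x), and consequently ‖U′(b,a) − U(b,a)‖_{B(Y,X)} ≤ M₀·M₁·sup_{0≤x≤1}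 ‖A′(x) − A(x)‖_{B(Y,X)}. -/
open Set
open Filter

lemma strong_apply_tendsto' {X : Type*} [NormedAddCommGroup X] [NormedSpace ℂ X]
    {α : Type*} {l : Filter α} (T : α → X →L[ℂ] X) (T₀ : X →L[ℂ] X)
    (g : α → X) (z : X) (M : ℝ)
    (hb : ∀ᶠ y in l, ‖T y‖ ≤ M)
    (hg : Tendsto g l (nhds z))
    (hT : Tendsto (fun y => T y z) l (nhds (T₀ z))) :
    Tendsto (fun y => T y (g y)) l (nhds (T₀ z)) := by
  rw [tendsto_iff_norm_sub_tendsto_zero]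
  have h1 : Tendsto (fun y => M * ‖g y - z‖ + ‖T y z - T₀ z‖) l (nhds 0) := by
    have h2 := (tendsto_iff_norm_sub_tendsto_zero.mp hg).const_mul M
    have h3 := tendsto_iff_norm_sub_tendsto_zero.mp hT
    simpa using h2.add h3
  refine squeeze_zero' (Eventually.of_forall fun y => norm_nonneg _) ?_ h1
  filter_upwards [hb] with y hy
  calc ‖T y (g y) - T₀ z‖ = ‖T y (g y - z) + (T y z - T₀ z)‖ := by rw [map_sub]; abel_nf
    _ ≤ ‖T y (g y - z)‖ + ‖T y z - T₀ z‖ := norm_add_le _ _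
    _ ≤ M * ‖g y - z‖ + ‖T y z - T₀ z‖ := by
        gcongr
        exact ((T y).le_opNorm _).trans (mul_le_mul_of_nonneg_right hy (norm_nonneg _))


/-- The identity and estimate from the proof of Lemma 3.5: for two evolution systems `U`, `U'`
on `X` whose generators `A`, `A'` are continuous families of bounded operators `Y → X` (with
`Y` continuously and densely embedded in `X` via `ι`, and `V` the restriction of `U` to `Y`),
one has `U'(b,a)v − U(b,a)v = ∫_a^b U'(b,x)[A'(x) − A(x)]U(x,a)v dx` for `v ∈ Y`, and hence
`‖U'(b,a) − U(b,a)‖_{B(Y,X)} ≤ M₀ M₁ sup_x ‖A'(x) − A(x)‖_{B(Y,X)}`. -/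
theorem evolution_system_difference_formula
    {X Y : Type*}
    [NormedAddCommGroup X] [NormedSpace ℂ X] [CompleteSpace X]
    [NormedAddCommGroup Y] [NormedSpace ℂ Y] [CompleteSpace Y]
    (ι : Y →L[ℂ] X) (hι : Function.Injective ι) (hdense : DenseRange ι)
    (U U' : ℝ → ℝ → (X →L[ℂ] X)) (V : ℝ → ℝ → (Y →L[ℂ] Y))
    (A A' : ℝ → (Y →L[ℂ] X))
    (hAcont : ContinuousOn A (Icc (0 : ℝ) 1)) (hA'cont : ContinuousOn A' (Icc (0 : ℝ) 1))
    -- evolution system axioms for U and U'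
    (hUid : ∀ s ∈ Icc (0 : ℝ) 1, U s s = 1)
    (hU'id : ∀ s ∈ Icc (0 : ℝ) 1, U' s s = 1)
    (hUcomp : ∀ s r t : ℝ, 0 ≤ s → s ≤ r → r ≤ t → t ≤ 1 →
      (U t r).comp (U r s) = U t s)
    (hU'comp : ∀ s r t : ℝ, 0 ≤ s → s ≤ r → r ≤ t → t ≤ 1 →
      (U' t r).comp (U' r s) = U' t s)
    (hUcont : ∀ x : X, ContinuousOn (fun p : ℝ × ℝ => U p.1 p.2 x)
      {p : ℝ × ℝ | 0 ≤ p.2 ∧ p.2 ≤ p.1 ∧ p.1 ≤ 1})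
    (hU'cont : ∀ x : X, ContinuousOn (fun p : ℝ × ℝ => U' p.1 p.2 x)
      {p : ℝ × ℝ | 0 ≤ p.2 ∧ p.2 ≤ p.1 ∧ p.1 ≤ 1})
    (M₀ M₁ : ℝ)
    -- (1): uniform bound for U' on X
    (hM₀ : ∀ s t : ℝ, 0 ≤ s → s ≤ t → t ≤ 1 → ‖U' t s‖ ≤ M₀)
    -- (2): U restricts to Y, with uniform bound and continuity in Y
    (hV : ∀ s t : ℝ, 0 ≤ s → s ≤ t → t ≤ 1 → ∀ v : Y, U t s (ι v) = ι (V t s v))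
    (hM₁ : ∀ s t : ℝ, 0 ≤ s → s ≤ t → t ≤ 1 → ‖V t s‖ ≤ M₁)
    (hVcont : ∀ v : Y, ContinuousOn (fun p : ℝ × ℝ => V p.1 p.2 v)
      {p : ℝ × ℝ | 0 ≤ p.2 ∧ p.2 ≤ p.1 ∧ p.1 ≤ 1})
    -- (3): differential equations, in the norm of X
    (hUderiv : ∀ (v : Y) (s t : ℝ), 0 ≤ s → s ≤ t → t ≤ 1 →
      HasDerivWithinAt (fun τ => U τ s (ι v)) (A t (V t s v)) (Icc s 1) t)
    (hU'deriv : ∀ (v : Y) (s t : ℝ), 0 ≤ s → s ≤ t → t ≤ 1 →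
      HasDerivWithinAt (fun σ => U' t σ (ι v)) (-(U' t s (A' s v))) (Icc 0 t) s) :
    ∀ a b : ℝ, 0 ≤ a → a ≤ b → b ≤ 1 →
      (∀ v : Y,
        ContinuousOn (fun x => U' b x ((A' x - A x) (V x a v))) (Icc a b) ∧
        U' b a (ι v) - U b a (ι v) = ∫ x in a..b, U' b x ((A' x - A x) (V x a v))) ∧
      ∀ K : ℝ, (∀ x ∈ Icc (0 : ℝ) 1, ‖A' x - A x‖ ≤ K) →
        ‖(U' b a).comp ι - (U b a).comp ι‖ ≤ M₀ * M₁ * K := by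
  intro a b ha hab hb1
  have ha1 : a ≤ 1 := hab.trans hb1
  have hb0 : 0 ≤ b := ha.trans hab
  -- strong continuity of U' b · on Icc a b
  have hU'b : ∀ z : X, ContinuousOn (fun y => U' b y z) (Icc a b) := by
    intro z
    have hmap : MapsTo (fun y : ℝ => ((b : ℝ), y)) (Icc a b)
        {p : ℝ × ℝ | 0 ≤ p.2 ∧ p.2 ≤ p.1 ∧ p.1 ≤ 1} :=
      fun y hy => ⟨ha.trans hy.1, hy.2, hb1⟩
    exact (hU'cont z).comp ((continuous_const.prodMk continuous_id).continuousOn) hmap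
  have hM₀' : ∀ y ∈ Icc a b, ‖U' b y‖ ≤ M₀ := fun y hy => hM₀ y b (ha.trans hy.1) hy.2 hb1
  have key : ∀ v : Y,
      ContinuousOn (fun x => U' b x ((A' x - A x) (V x a v))) (Icc a b) ∧
      U' b a (ι v) - U b a (ι v) = ∫ x in a..b, U' b x ((A' x - A x) (V x a v)) := by
    intro v
    set G : ℝ → X := fun x => U' b x ((A' x - A x) (V x a v)) with hGdef
    have hVv : ContinuousOn (fun x => V x a v) (Icc a b) := by
      have hmap : MapsTo (fun x : ℝ => (x, a)) (Icc a b)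
          {p : ℝ × ℝ | 0 ≤ p.2 ∧ p.2 ≤ p.1 ∧ p.1 ≤ 1} :=
        fun x hx => ⟨ha, hx.1, hx.2.trans hb1⟩
      exact (hVcont v).comp ((continuous_id.prodMk continuous_const).continuousOn) hmap
    have hgc : ContinuousOn (fun x => (A' x - A x) (V x a v)) (Icc a b) := by
      have hAB : ContinuousOn (fun x => A' x - A x) (Icc a b) :=
        (hA'cont.sub hAcont).mono (Icc_subset_Icc ha hb1)
      exact hAB.clm_apply hVv
    have hGcont : ContinuousOn G (Icc a b) := by
      intro x hx
      exact strong_apply_tendsto' (fun y => U' b y) (U' b x) _ _ M₀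
        (Filter.eventually_of_mem self_mem_nhdsWithin hM₀') (hgc x hx) (hU'b _ x hx)
    set f : ℝ → X := fun x => U' b x (U x a (ι v)) with hfdef
    have hfderiv : ∀ x ∈ Icc a b, HasDerivWithinAt f (-(G x)) (Icc a b) x := by
      intro x hx
      have hx0 : 0 ≤ x := ha.trans hx.1
      have hx1 : x ≤ 1 := hx.2.trans hb1
      have hhx : U x a (ι v) = ι (V x a v) := hV a x ha hx.1 hx1 v
      set w : X := A x (V x a v) with hwdef
      have hg1 : HasDerivWithinAt (fun σ => U' b σ (ι (V x a v)))
          (-(U' b x (A' x (V x a v)))) (Icc a b) x :=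
        (hU'deriv (V x a v) x b hx0 hx.2 hb1).mono (Icc_subset_Icc ha le_rfl)
      have hh : HasDerivWithinAt (fun τ => U τ a (ι v)) w (Icc a b) x :=
        (hUderiv v a x ha hx.1 hx1).mono (Icc_subset_Icc le_rfl hb1)
      have hslopeh : Tendsto (slope (fun τ => U τ a (ι v)) x) (nhdsWithin x (Icc a b \ {x}))
          (nhds w) := hasDerivWithinAt_iff_tendsto_slope.mp hh
      have hT : Tendsto (fun y => U' b y w) (nhdsWithin x (Icc a b \ {x}))
          (nhds (U' b x w)) :=
        ((hU'b w x hx).mono_left (nhdsWithin_mono x diff_subset))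
      have hb' : ∀ᶠ y in nhdsWithin x (Icc a b \ {x}), ‖U' b y‖ ≤ M₀ :=
        Filter.eventually_of_mem self_mem_nhdsWithin (fun y hy => hM₀' y hy.1)
      have h2 := strong_apply_tendsto' (fun y => U' b y) (U' b x)
        (slope (fun τ => U τ a (ι v)) x) w M₀ hb' hslopeh hT
      have hslopeg1 := hasDerivWithinAt_iff_tendsto_slope.mp hg1
      have hcomb := hslopeg1.add h2
      have heq : ∀ y, slope (fun σ => U' b σ (ι (V x a v))) x y
          + U' b y (slope (fun τ => U τ a (ι v)) x y) = slope f x y := by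
        intro y
        simp only [slope_def_module, (U' b y).map_smul_of_tower, ← smul_add]
        congr 1
        simp only [hfdef, map_sub, ← hhx]
        abel
      have hval : -(U' b x (A' x (V x a v))) + U' b x w = -(G x) := by
        simp only [hGdef, hwdef, ContinuousLinearMap.sub_apply, map_sub]
        abel
      rw [hasDerivWithinAt_iff_tendsto_slope, ← hval]
      exact hcomb.congr heq
    have hfcont : ContinuousOn f (Icc a b) := fun x hx => (hfderiv x hx).continuousWithinAt
    have hioo : ∀ x ∈ Ioo a b, HasDerivWithinAt f (-(G x)) (Ioi x) x := fun x hx =>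
      ((hfderiv x (Ioo_subset_Icc_self hx)).hasDerivAt (Icc_mem_nhds hx.1 hx.2)).hasDerivWithinAt
    have hintg : IntervalIntegrable (fun x => -(G x)) MeasureTheory.volume a b :=
      (hGcont.neg).intervalIntegrable_of_Icc hab
    have hFTC := intervalIntegral.integral_eq_sub_of_hasDeriv_right_of_le hab hfcont hioo hintg
    rw [intervalIntegral.integral_neg] at hFTC
    have hfb : f b = U b a (ι v) := by
      simp [hfdef, hU'id b ⟨hb0, hb1⟩]
    have hfa : f a = U' b a (ι v) := by
      simp [hfdef, hUid a ⟨ha, ha1⟩]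
    rw [hfa, hfb] at hFTC
    refine ⟨hGcont, ?_⟩
    rw [← neg_sub (U b a (ι v)), ← hFTC, neg_neg]
  refine ⟨key, ?_⟩
  intro K hK
  have hM₀0 : 0 ≤ M₀ := (norm_nonneg _).trans (hM₀ 0 1 le_rfl zero_le_one le_rfl)
  have hM₁0 : 0 ≤ M₁ := (norm_nonneg _).trans (hM₁ 0 1 le_rfl zero_le_one le_rfl)
  have hK0 : 0 ≤ K := (norm_nonneg _).trans (hK 0 ⟨le_rfl, zero_le_one⟩)
  refine ContinuousLinearMap.opNorm_le_bound _ (by positivity) ?_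
  intro v
  have happ : ((U' b a).comp ι - (U b a).comp ι) v
      = ∫ x in a..b, U' b x ((A' x - A x) (V x a v)) := by
    simpa using (key v).2
  rw [happ]
  have hbound : ∀ x ∈ uIoc a b, ‖U' b x ((A' x - A x) (V x a v))‖ ≤ M₀ * (K * (M₁ * ‖v‖)) := by
    intro x hx
    rw [uIoc_of_le hab] at hx
    have hx' : x ∈ Icc a b := ⟨hx.1.le, hx.2⟩
    have h1 : ‖V x a v‖ ≤ M₁ * ‖v‖ :=
      ((V x a).le_opNorm v).trans
        (mul_le_mul_of_nonneg_right (hM₁ a x ha hx'.1 (hx'.2.trans hb1)) (norm_nonneg _))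
    have h2 : ‖(A' x - A x) (V x a v)‖ ≤ K * (M₁ * ‖v‖) := by
      refine ((A' x - A x).le_opNorm _).trans ?_
      exact mul_le_mul (hK x ⟨ha.trans hx'.1, hx'.2.trans hb1⟩) h1 (norm_nonneg _) hK0
    refine ((U' b x).le_opNorm _).trans ?_
    exact mul_le_mul (hM₀' x hx') h2 (norm_nonneg _) hM₀0
  calc ‖∫ x in a..b, U' b x ((A' x - A x) (V x a v))‖
      ≤ M₀ * (K * (M₁ * ‖v‖)) * |b - a| :=
        intervalIntegral.norm_integral_le_of_norm_le_const hbound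
    _ ≤ M₀ * M₁ * K * ‖v‖ := by
        have habs : |b - a| ≤ 1 := by
          rw [abs_of_nonneg (sub_nonneg.mpr hab)]; linarith
        calc M₀ * (K * (M₁ * ‖v‖)) * |b - a| ≤ M₀ * (K * (M₁ * ‖v‖)) * 1 := by
              gcongr
          _ = M₀ * M₁ * K * ‖v‖ := by ring
end

section
/- Let H be a complex Hilbert space and let {A(t)}_{t∈[0,1]} be closed, densely defined operators on H such that each A(t) generates a C₀-semigroup T_t : [0,∞) → B(H) and each adjoint A(1−t)* generates a C₀-semigroup T̃_t : [0,∞) → B(H). For 0 ≤ s ≤ t ≤ 1 and n ≥ 1, set Δ = (t−s)/n and define the approximating products U_n(t,s) := T_{s+(n−1)Δ}(Δ) ⋯ T_{s+Δ}(Δ) T_s(Δ) and Ũ_n(t,s) := T̃_{s+(n−1)Δ}(Δ) ⋯ T̃_{s+Δ}(Δ) T̃_s(Δ). Suppose there are families of bounded operators U(t,s) and Ũ(t,s), 0 ≤ s ≤ t ≤ 1, such that U_n(t,s) → U(t,s) and Ũ_n(t,s) → Ũ(t,s) in the strong operator topology as n → ∞, with sup_n ‖U_n(t,s)‖ < ∞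 for each fixed (t,s). Then Ũ(t,s) = U(1−s, 1−t)* for all 0 ≤ s ≤ t ≤ 1. -/
open Filter Topology

/-- `T : ℝ → B(H)` (restricted to `[0,∞)`) is a `C₀`-semigroup. -/
def IsC0Semigroup {H : Type*} [NormedAddCommGroup H] [InnerProductSpace ℂ H]
    (T : ℝ → H →L[ℂ] H) : Prop :=
  T 0 = 1 ∧ (∀ s t : ℝ, 0 ≤ s → 0 ≤ t → T (s + t) = (T s).comp (T t)) ∧
    ∀ x : H, ContinuousOn (fun t => T t x) (Set.Ici (0 : ℝ))

/-- `A` is the generator of the semigroup `T`. -/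
def IsGenerator {H : Type*} [NormedAddCommGroup H] [InnerProductSpace ℂ H]
    (A : H →ₗ.[ℂ] H) (T : ℝ → H →L[ℂ] H) : Prop :=
  (∀ (x : H) (hx : x ∈ A.domain),
      Tendsto (fun t : ℝ => (t : ℂ)⁻¹ • (T t x - x)) (𝓝[>] (0 : ℝ)) (𝓝 (A ⟨x, hx⟩))) ∧
    ∀ x : H,
      (∃ y : H, Tendsto (fun t : ℝ => (t : ℂ)⁻¹ • (T t x - x)) (𝓝[>] (0 : ℝ)) (𝓝 y)) →
        x ∈ A.domain

/-- The approximating product `T_{s+(n-1)Δ}(Δ) ⋯ T_{s+Δ}(Δ) T_s(Δ)`, where `Δ = (t-s)/n`. -/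
noncomputable def approxProd {H : Type*} [NormedAddCommGroup H] [InnerProductSpace ℂ H]
    (T : ℝ → ℝ → (H →L[ℂ] H)) (t s : ℝ) (n : ℕ) : H →L[ℂ] H :=
  (List.range n).foldl
    (fun acc k => (T (s + (k : ℝ) * ((t - s) / (n : ℝ))) ((t - s) / (n : ℝ))).comp acc) 1

namespace Lem36

variable {H : Type*} [NormedAddCommGroup H] [InnerProductSpace ℂ H]

local notation "⟪" x ", " y "⟫" => @inner ℂ _ _ x y

lemma csmul_eq (t : ℝ) (v : H) : (t : ℂ)⁻¹ • v = t⁻¹ • v := by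
  rw [RCLike.real_smul_eq_coe_smul (K := ℂ), RCLike.ofReal_inv]; rfl

variable {T : ℝ → H →L[ℂ] H} {A : H →ₗ.[ℂ] H}

lemma gen_tendsto_real (hG : IsGenerator A T) (y : H) (hy : y ∈ A.domain) :
    Tendsto (fun t : ℝ => t⁻¹ • (T t y - y)) (𝓝[>] (0 : ℝ)) (𝓝 (A ⟨y, hy⟩)) := by
  have h := hG.1 y hy
  simpa only [csmul_eq] using h

lemma sg_apply_add (hT : IsC0Semigroup T) {a b : ℝ} (ha : 0 ≤ a) (hb : 0 ≤ b) (x : H) :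
    T (a + b) x = T a (T b x) := by
  rw [hT.2.1 a b ha hb]; rfl

lemma sg_bound [CompleteSpace H] (hT : IsC0Semigroup T) (K : ℝ) :
    ∃ C : ℝ, 0 ≤ C ∧ ∀ u ∈ Set.Icc (0 : ℝ) K, ‖T u‖ ≤ C := by
  rcases le_or_gt 0 K with hK | hK
  · have hptw : ∀ x : H, ∃ C, ∀ u : Set.Icc (0 : ℝ) K, ‖T u x‖ ≤ C := by
      intro x
      have hc : ContinuousOn (fun t => ‖T t x‖) (Set.Icc 0 K) :=
        ((hT.2.2 x).mono (Set.Icc_subset_Ici_self)).norm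
      obtain ⟨z, hz, hmax⟩ :=
        isCompact_Icc.exists_isMaxOn (Set.nonempty_Icc.2 hK) hc
      exact ⟨‖T z x‖, fun u => hmax u.2⟩
    obtain ⟨C, hC⟩ := banach_steinhaus hptw
    exact ⟨max C 0, le_max_right _ _, fun u hu => (hC ⟨u, hu⟩).trans (le_max_left _ _)⟩
  · exact ⟨0, le_refl 0, fun u hu => ((hK.not_ge (hu.1.trans hu.2)).elim)⟩

lemma orbit_mem (hT : IsC0Semigroup T) (hG : IsGenerator A T) {y : H} (hy : y ∈ A.domain)
    {r : ℝ} (hr : 0 ≤ r) :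
    ∃ h : T r y ∈ A.domain, A ⟨T r y, h⟩ = T r (A ⟨y, hy⟩) := by
  have key : Tendsto (fun t : ℝ => (t : ℂ)⁻¹ • (T t (T r y) - T r y)) (𝓝[>] (0 : ℝ))
      (𝓝 (T r (A ⟨y, hy⟩))) := by
    have h1 : Tendsto (fun t : ℝ => T r ((t : ℂ)⁻¹ • (T t y - y))) (𝓝[>] (0 : ℝ))
        (𝓝 (T r (A ⟨y, hy⟩))) := ((T r).continuous.tendsto _).comp (hG.1 y hy)
    refine h1.congr' ?_
    filter_upwards [self_mem_nhdsWithin] with t ht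
    have hc : T t (T r y) = T r (T t y) := by
      rw [← sg_apply_add hT (le_of_lt ht) hr, ← sg_apply_add hT hr (le_of_lt ht), add_comm]
    rw [map_smul, map_sub, hc]
  have hmem : T r y ∈ A.domain := hG.2 _ ⟨_, key⟩
  exact ⟨hmem, tendsto_nhds_unique (hG.1 _ hmem) key⟩

lemma tendsto_sub_right (u : ℝ) :
    Tendsto (fun v : ℝ => v - u) (𝓝[>] u) (𝓝[>] (0 : ℝ)) := by
  refine tendsto_nhdsWithin_of_tendsto_nhds_of_eventually_within _ ?_ ?_
  · have : Tendsto (fun v : ℝ => v - u) (𝓝 u) (𝓝 (u - u)) :=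
      (continuous_id.sub continuous_const).tendsto u
    rw [sub_self] at this
    exact this.mono_left nhdsWithin_le_nhds
  · filter_upwards [self_mem_nhdsWithin] with v hv
    exact sub_pos.mpr (Set.mem_Ioi.mp hv)

lemma tendsto_sub_left (u : ℝ) :
    Tendsto (fun v : ℝ => u - v) (𝓝[<] u) (𝓝[>] (0 : ℝ)) := by
  refine tendsto_nhdsWithin_of_tendsto_nhds_of_eventually_within _ ?_ ?_
  · have : Tendsto (fun v : ℝ => u - v) (𝓝 u) (𝓝 (u - u)) :=
      (continuous_const.sub continuous_id).tendsto u
    rw [sub_self] at this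
    exact this.mono_left nhdsWithin_le_nhds
  · filter_upwards [self_mem_nhdsWithin] with v hv
    exact sub_pos.mpr (Set.mem_Iio.mp hv)

lemma tendsto_orbit_within (hT : IsC0Semigroup T) (z : H) {u : ℝ} (hu : 0 ≤ u)
    {l : Filter ℝ} (hl : l ≤ 𝓝[Set.Ici (0:ℝ)] u) :
    Tendsto (fun v => T v z) l (𝓝 (T u z)) :=
  ((hT.2.2 z) u hu).tendsto.mono_left hl

lemma orbit_hasDerivAt [CompleteSpace H] (hT : IsC0Semigroup T) (hG : IsGenerator A T)
    {y : H} (hy : y ∈ A.domain) {u : ℝ} (hu : 0 < u) :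
    HasDerivAt (fun v => T v y) (T u (A ⟨y, hy⟩)) u := by
  rw [hasDerivAt_iff_tendsto_slope, ← nhdsLT_sup_nhdsGT u, tendsto_sup]
  constructor
  · -- from the left
    obtain ⟨C, hC0, hC⟩ := sg_bound hT u
    have hIoo : Set.Ioo (0:ℝ) u ∈ 𝓝[<] u := Ioo_mem_nhdsLT hu
    have hw : Tendsto (fun v => (u - v)⁻¹ • (T (u - v) y - y)) (𝓝[<] u) (𝓝 (A ⟨y, hy⟩)) :=
      (gen_tendsto_real hG y hy).comp (tendsto_sub_left u)
    have hslope : ∀ᶠ v in 𝓝[<] u,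
        slope (fun v => T v y) u v = T v ((u - v)⁻¹ • (T (u - v) y - y)) := by
      filter_upwards [hIoo] with v hv
      have h1 : T u y = T v (T (u - v) y) := by
        rw [← sg_apply_add hT hv.1.le (sub_nonneg.mpr hv.2.le), add_sub_cancel]
      rw [slope_def_module, h1, ← map_sub, ← ContinuousLinearMap.map_smul_of_tower]
      congr 1
      rw [← neg_sub u v, inv_neg, neg_smul, ← smul_neg, neg_sub]
    rw [tendsto_congr' hslope]
    have horb : Tendsto (fun v => T v (A ⟨y, hy⟩)) (𝓝[<] u) (𝓝 (T u (A ⟨y, hy⟩))) := by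
      refine tendsto_orbit_within hT _ hu.le (nhdsWithin_le_of_mem ?_)
      exact mem_of_superset hIoo (fun v hv => hv.1.le)
    rw [tendsto_iff_norm_sub_tendsto_zero]
    refine squeeze_zero' (g := fun v => C * ‖(u - v)⁻¹ • (T (u - v) y - y) - A ⟨y, hy⟩‖
        + ‖T v (A ⟨y, hy⟩) - T u (A ⟨y, hy⟩)‖)
      (Eventually.of_forall fun v => norm_nonneg _) ?_ ?_
    · filter_upwards [hIoo] with v hv
      calc ‖T v ((u - v)⁻¹ • (T (u - v) y - y)) - T u (A ⟨y, hy⟩)‖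
          = ‖T v ((u - v)⁻¹ • (T (u - v) y - y) - A ⟨y, hy⟩)
              + (T v (A ⟨y, hy⟩) - T u (A ⟨y, hy⟩))‖ := by
            rw [map_sub]; abel_nf
        _ ≤ ‖T v ((u - v)⁻¹ • (T (u - v) y - y) - A ⟨y, hy⟩)‖
              + ‖T v (A ⟨y, hy⟩) - T u (A ⟨y, hy⟩)‖ := norm_add_le _ _
        _ ≤ C * ‖(u - v)⁻¹ • (T (u - v) y - y) - A ⟨y, hy⟩‖
              + ‖T v (A ⟨y, hy⟩) - T u (A ⟨y, hy⟩)‖ := by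
            gcongr
            exact ((T v).le_opNorm _).trans
              (mul_le_mul_of_nonneg_right (hC v ⟨hv.1.le, hv.2.le⟩) (norm_nonneg _))
    · have t1 : Tendsto (fun v => C * ‖(u - v)⁻¹ • (T (u - v) y - y) - A ⟨y, hy⟩‖)
          (𝓝[<] u) (𝓝 0) := by
        have := ((hw.sub (tendsto_const_nhds (x := (A ⟨y, hy⟩ : H)))).norm).const_mul C
        simpa using this
      have t2 : Tendsto (fun v => ‖T v (A ⟨y, hy⟩) - T u (A ⟨y, hy⟩)‖) (𝓝[<] u) (𝓝 0) := by
        simpa using (horb.sub (tendsto_const_nhds (x := T u (A ⟨y, hy⟩)))).norm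
      simpa using t1.add t2
  · -- from the right
    have hw : Tendsto (fun v => (v - u)⁻¹ • (T (v - u) y - y)) (𝓝[>] u) (𝓝 (A ⟨y, hy⟩)) :=
      (gen_tendsto_real hG y hy).comp (tendsto_sub_right u)
    have h := ((T u).continuous.tendsto _).comp hw
    refine h.congr' ?_
    filter_upwards [self_mem_nhdsWithin] with v hv
    have hv' : u < v := Set.mem_Ioi.mp hv
    have h1 : T v y = T u (T (v - u) y) := by
      rw [← sg_apply_add hT hu.le (sub_nonneg.mpr hv'.le), add_sub_cancel]
    simp only [Function.comp]
    rw [slope_def_module, h1, ← map_sub, ← ContinuousLinearMap.map_smul_of_tower]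

open MeasureTheory intervalIntegral in
lemma gen_dense [CompleteSpace H] (hT : IsC0Semigroup T) (hG : IsGenerator A T) :
    Dense ((A.domain : Submodule ℂ H) : Set H) := by
  intro x
  set f : ℝ → H := fun v => T v x with hfdef
  have hfc : ContinuousOn f (Set.Ici 0) := hT.2.2 x
  have hsub : ∀ {a b : ℝ}, 0 ≤ a → 0 ≤ b → Set.uIcc a b ⊆ Set.Ici (0:ℝ) := by
    intro a b ha hb z hz
    exact le_trans (le_inf ha hb) hz.1
  have hint : ∀ {a b : ℝ}, 0 ≤ a → 0 ≤ b → IntervalIntegrable f volume a b := by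
    intro a b ha hb
    exact (hfc.mono (hsub ha hb)).intervalIntegrable
  set F : ℝ → H := fun u => ∫ v in (0:ℝ)..u, f v with hFdef
  have hFd : ∀ b : ℝ, 0 ≤ b → HasDerivWithinAt F (f b) (Set.Ici b) b := by
    intro b hb
    refine integral_hasDerivWithinAt_right (hint le_rfl hb) ?_ ?_
    · refine ⟨Set.Ici b, mem_of_superset self_mem_nhdsWithin Set.Ioi_subset_Ici_self, ?_⟩
      exact (hfc.mono (Set.Ici_subset_Ici.mpr hb)).aestronglyMeasurable measurableSet_Ici
    · exact (hfc b hb).mono (fun z hz => hb.trans (le_of_lt hz))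
  have slope_right : ∀ b : ℝ, 0 ≤ b →
      Tendsto (fun h : ℝ => h⁻¹ • (F (b + h) - F b)) (𝓝[>] (0:ℝ)) (𝓝 (f b)) := by
    intro b hb
    have h1 := (hasDerivWithinAt_iff_tendsto_slope).mp (hFd b hb)
    rw [Set.Ici_sdiff_left] at h1
    have h2 : Tendsto (fun h : ℝ => b + h) (𝓝[>] (0:ℝ)) (𝓝[>] b) := by
      refine tendsto_nhdsWithin_of_tendsto_nhds_of_eventually_within _ ?_ ?_
      · have : Tendsto (fun h : ℝ => b + h) (𝓝 0) (𝓝 (b + 0)) :=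
          (continuous_const.add continuous_id).tendsto 0
        rw [add_zero] at this
        exact this.mono_left nhdsWithin_le_nhds
      · filter_upwards [self_mem_nhdsWithin] with h hh
        exact lt_add_of_pos_right b (Set.mem_Ioi.mp hh)
    have h3 := h1.comp h2
    refine h3.congr' ?_
    filter_upwards [self_mem_nhdsWithin] with h hh
    simp only [Function.comp, slope_def_module, add_sub_cancel_left]
  have hF0 : F 0 = 0 := integral_same
  have key : ∀ t : ℝ, 0 < t → F t ∈ A.domain := by
    intro t ht
    apply hG.2
    refine ⟨f t - x, ?_⟩
    have main : ∀ᶠ h : ℝ in 𝓝[>] (0:ℝ), (h:ℂ)⁻¹ • (T h (F t) - F t)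
        = h⁻¹ • (F (t + h) - F t) - h⁻¹ • (F (0 + h) - F 0) := by
      filter_upwards [self_mem_nhdsWithin] with h hh
      have hh' : (0:ℝ) < h := Set.mem_Ioi.mp hh
      have e1 : T h (F t) = ∫ v in (0:ℝ)..t, f (v + h) := by
        rw [hFdef]
        simp only
        rw [← ContinuousLinearMap.intervalIntegral_comp_comm (T h) (hint le_rfl ht.le)]
        refine integral_congr ?_
        intro v hv
        have hv0 : 0 ≤ v := hsub le_rfl ht.le hv
        rw [hfdef]
        simp only
        rw [← sg_apply_add hT hh'.le hv0, add_comm]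
      have e2 : (∫ v in (0:ℝ)..t, f (v + h)) = ∫ v in h..(t + h), f v := by
        simpa using integral_comp_add_right (a := (0:ℝ)) (b := t) f h
      have e3 : (∫ v in h..(t + h), f v) = F (t + h) - F h :=
        (integral_interval_sub_left (hint le_rfl (by linarith)) (hint le_rfl hh'.le)).symm
      rw [csmul_eq, e1, e2, e3, hF0, zero_add, sub_zero, ← smul_sub]
      congr 1
      abel
    rw [tendsto_congr' main]
    have l1 := slope_right t ht.le
    have l2 := slope_right 0 le_rfl
    have : T 0 x = x := by rw [hT.1]; rfl
    rw [hfdef] at l2; simp only at l2; rw [this] at l2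
    exact l1.sub l2
  have lim : Tendsto (fun t : ℝ => t⁻¹ • F t) (𝓝[>] (0:ℝ)) (𝓝 x) := by
    have := slope_right 0 le_rfl
    simp only [zero_add, hF0, sub_zero] at this
    have hfx : f 0 = x := by rw [hfdef]; simp only; rw [hT.1]; rfl
    rwa [hfx] at this
  refine mem_closure_of_tendsto lim ?_
  filter_upwards [self_mem_nhdsWithin] with t ht
  have hFt : F t ∈ A.domain := key t (Set.mem_Ioi.mp ht)
  show t⁻¹ • F t ∈ (A.domain : Set H)
  rw [RCLike.real_smul_eq_coe_smul (K := ℂ)]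
  exact A.domain.smul_mem _ hFt

lemma sg_adjoint [CompleteSpace H] {A : H →ₗ.[ℂ] H} (hd : Dense (A.domain : Set H))
    {S S' : ℝ → H →L[ℂ] H} (hS : IsC0Semigroup S) (hSA : IsGenerator A S)
    (hS' : IsC0Semigroup S') (hS'A : IsGenerator A.adjoint S') {r : ℝ} (hr : 0 ≤ r) :
    S' r = ContinuousLinearMap.adjoint (S r) := by
  have hd' : Dense ((A.adjoint.domain : Submodule ℂ H) : Set H) := gen_dense hS' hS'A
  have hformal := LinearPMap.adjoint_isFormalAdjoint (hT := hd)
  have main : ∀ (x : H) (hx : x ∈ A.adjoint.domain) (y : H) (hy : y ∈ A.domain),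
      ⟪S' r x, y⟫ = ⟪x, S r y⟫ := by
    intro x hx y hy
    rcases eq_or_lt_of_le hr with hr0 | hr0
    · rw [← hr0, hS.1, hS'.1]; rfl
    · set g : ℝ → ℂ := fun u => ⟪S' u x, S (r - u) y⟫ with hgdef
      have gcont : ContinuousOn g (Set.Icc 0 r) := by
        refine ContinuousOn.inner ?_ ?_
        · exact (hS'.2.2 x).mono (Set.Icc_subset_Ici_self)
        · refine ((hS.2.2 y).comp (continuous_const.sub continuous_id).continuousOn ?_)
          intro u hu
          exact sub_nonneg.mpr hu.2
      have gderiv : ∀ u ∈ Set.Ioo 0 r, HasDerivAt g 0 u := by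
        intro u hu
        obtain ⟨hmem', hval'⟩ := orbit_mem hS' hS'A hx hu.1.le
        obtain ⟨hmem, hval⟩ := orbit_mem hS hSA hy (sub_nonneg.mpr hu.2.le)
        have d1 : HasDerivAt (fun v => S' v x) (S' u (A.adjoint ⟨x, hx⟩)) u :=
          orbit_hasDerivAt hS' hS'A hx hu.1
        have d2 : HasDerivAt (fun v => S (r - v) y)
            (-(S (r - u) (A ⟨y, hy⟩))) u := by
          have base : HasDerivAt (fun v => S v y) (S (r - u) (A ⟨y, hy⟩)) (r - u) :=
            orbit_hasDerivAt hS hSA hy (sub_pos.mpr hu.2)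
          have hsub : HasDerivAt (fun v : ℝ => r - v) (-1) u := by
            simpa using (hasDerivAt_id u).const_sub r
          have := base.scomp u hsub
          simpa [Function.comp_def] using this
        have dg := d1.inner ℂ d2
        have hzero : (⟪S' u x, -(S (r - u) (A ⟨y, hy⟩))⟫
            + ⟪S' u (A.adjoint ⟨x, hx⟩), S (r - u) y⟫ : ℂ) = 0 := by
          have hadj : (⟪S' u (A.adjoint ⟨x, hx⟩), S (r - u) y⟫ : ℂ)
              = ⟪S' u x, S (r - u) (A ⟨y, hy⟩)⟫ := by
            have h1 := hformal (⟨S' u x, hmem'⟩ : A.adjoint.domain)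
              (⟨S (r - u) y, hmem⟩ : A.domain)
            simp only at h1
            rw [hval', hval] at h1
            exact h1
          rw [inner_neg_right, hadj]
          ring
        rw [hzero] at dg
        exact dg
      have hconst : g r = g 0 := by
        have hval : ∀ ε ∈ Set.Ioc (0:ℝ) r, g r = g ε := by
          intro ε hε
          have happ := constant_of_has_deriv_right_zero (f := g) (a := ε) (b := r)
            (gcont.mono (Set.Icc_subset_Icc hε.1.le le_rfl))
            (fun z hz => (gderiv z ⟨lt_of_lt_of_le hε.1 hz.1, hz.2⟩).hasDerivWithinAt)
          exact happ r (Set.right_mem_Icc.mpr hε.2)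
        have hIoc : Set.Ioc (0:ℝ) r ∈ 𝓝[>] (0:ℝ) := Ioc_mem_nhdsGT_of_mem ⟨le_rfl, hr0⟩
        have t1 : Tendsto g (𝓝[>] (0:ℝ)) (𝓝 (g 0)) := by
          have hcw : ContinuousWithinAt g (Set.Icc 0 r) 0 :=
            gcont 0 (Set.left_mem_Icc.mpr hr0.le)
          exact hcw.tendsto.mono_left
            (nhdsWithin_le_of_mem (mem_of_superset hIoc Set.Ioc_subset_Icc_self))
        have t2 : Tendsto g (𝓝[>] (0:ℝ)) (𝓝 (g r)) := by
          refine tendsto_const_nhds.congr' ?_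
          filter_upwards [hIoc] with ε hε
          exact hval ε hε
        exact tendsto_nhds_unique t2 t1
      have e1 : g r = ⟪S' r x, y⟫ := by
        rw [hgdef]; simp only [sub_self, hS.1]; rfl
      have e2 : g 0 = ⟪x, S r y⟫ := by
        rw [hgdef]; simp only [sub_zero, hS'.1]; rfl
      rw [← e1, hconst, e2]
  have step1 : ∀ (x : H), x ∈ A.adjoint.domain →
      S' r x = ContinuousLinearMap.adjoint (S r) x := by
    intro x hx
    refine ext_inner_right ℂ (fun v => ?_)
    rw [ContinuousLinearMap.adjoint_inner_left]
    have hfun : (fun y => (⟪S' r x, y⟫ : ℂ)) = fun y => ⟪x, S r y⟫ := by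
      refine Continuous.ext_on hd ?_ ?_ ?_
      · exact continuous_const.inner continuous_id
      · exact continuous_const.inner (S r).continuous
      · exact fun y hy => main x hx y hy
    exact congrFun hfun v
  ext x
  have hfun : (fun z => S' r z) = fun z => ContinuousLinearMap.adjoint (S r) z :=
    Continuous.ext_on hd' (S' r).continuous (ContinuousLinearMap.adjoint (S r)).continuous
      (fun z hz => step1 z hz)
  exact congrFun hfun x

lemma flatcast (l : List ℕ) : (l.flatMap fun (a : ℕ) => [(a : ℝ)]) = l.map Nat.cast := by
  induction l with
  | nil => rfl
  | cons h t ih => simp [ih]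

noncomputable def Rprod (T : ℝ → ℝ → (H →L[ℂ] H)) (a δ : ℝ) (n : ℕ) : H →L[ℂ] H :=
  (List.range n).foldl (fun acc (k : ℕ) => (T (a + (k : ℝ) * δ) δ).comp acc) 1

lemma approxProd_eq_Rprod (T : ℝ → ℝ → (H →L[ℂ] H)) (t s : ℝ) (n : ℕ) :
    (List.range n).foldl
      (fun acc k => (T (s + (k : ℝ) * ((t - s) / (n : ℝ))) ((t - s) / (n : ℝ))).comp acc) 1
      = Rprod T s ((t - s) / (n : ℝ)) n := by
  unfold Rprod
  simp only [List.pure_def, List.bind_eq_flatMap, flatcast, List.foldl_map]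

lemma Rprod_succ (T : ℝ → ℝ → (H →L[ℂ] H)) (a δ : ℝ) (n : ℕ) :
    Rprod T a δ (n + 1) = (T (a + (n : ℝ) * δ) δ).comp (Rprod T a δ n) := by
  unfold Rprod
  rw [List.range_succ, List.foldl_append]
  rfl

lemma Rprod_succ' (T : ℝ → ℝ → (H →L[ℂ] H)) (a δ : ℝ) (n : ℕ) :
    Rprod T a δ (n + 1) = (Rprod T (a + δ) δ n).comp (T a δ) := by
  induction n with
  | zero =>
    rw [Rprod_succ]
    simp only [Rprod, List.range_zero, List.foldl_nil, Nat.cast_zero, zero_mul, add_zero]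
    ext v
    simp
  | succ m ih =>
    rw [Rprod_succ, ih, Rprod_succ]
    rw [← ContinuousLinearMap.comp_assoc]
    congr 2
    push_cast
    ring

lemma Rprod_adjoint [CompleteSpace H] (T Ttil : ℝ → ℝ → (H →L[ℂ] H))
    (hπ : ∀ τ ∈ Set.Icc (0:ℝ) 1, ∀ r : ℝ, 0 ≤ r →
      Ttil τ r = ContinuousLinearMap.adjoint (T (1 - τ) r))
    {δ : ℝ} (hδ : 0 ≤ δ) (s : ℝ) :
    ∀ n : ℕ, (∀ k : ℕ, k < n → s + (k : ℝ) * δ ∈ Set.Icc (0:ℝ) 1) →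
      Rprod Ttil s δ n
        = ContinuousLinearMap.adjoint (Rprod T (1 - s + δ - (n : ℝ) * δ) δ n) := by
  intro n
  induction n with
  | zero =>
    intro _
    simp only [Rprod, List.range_zero, List.foldl_nil]
    rw [show (1 : H →L[ℂ] H) = ContinuousLinearMap.id ℂ H from rfl,
      ContinuousLinearMap.adjoint_id]
  | succ m ih =>
    intro hk
    rw [Rprod_succ, ih (fun k hkm => hk k (hkm.trans (Nat.lt_succ_self m))),
      hπ (s + (m : ℝ) * δ) (hk m (Nat.lt_succ_self m)) δ hδ,
      ← ContinuousLinearMap.adjoint_comp]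
    congr 1
    have e1 : (1:ℝ) - s + δ - ((m + 1 : ℕ) : ℝ) * δ = 1 - (s + (m : ℝ) * δ) := by
      push_cast; ring
    have e2 : (1:ℝ) - (s + (m : ℝ) * δ) + δ = 1 - s + δ - (m : ℝ) * δ := by
      push_cast; ring
    rw [Rprod_succ', e1, e2]

end Lem36

open Lem36 in
/-- **Lemma 3.6** (adjoint of a time-ordered exponential).  Let `{A(t)}` be closed, densely
defined operators on a complex Hilbert space `H` such that each `A(t)` generates a
`C₀`-semigroup `T_t` and each `A(1-t)*` generates a `C₀`-semigroup `T̃_t`.  If the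
approximating products `U_n(t,s)` and `Ũ_n(t,s)` converge strongly to `U(t,s)` and `Ũ(t,s)`
respectively, with `sup_n ‖U_n(t,s)‖ < ∞` for each `(t,s)`, then `Ũ(t,s) = U(1-s, 1-t)*`. -/
theorem adjoint_of_time_ordered_exponential
    {H : Type*} [NormedAddCommGroup H] [InnerProductSpace ℂ H] [CompleteSpace H]
    (A : ℝ → (H →ₗ.[ℂ] H))
    (hclosed : ∀ t ∈ Set.Icc (0 : ℝ) 1, (A t).IsClosed)
    (hdense : ∀ t ∈ Set.Icc (0 : ℝ) 1, Dense (((A t).domain : Submodule ℂ H) : Set H))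
    (T Ttil : ℝ → ℝ → (H →L[ℂ] H))
    (hT : ∀ t ∈ Set.Icc (0 : ℝ) 1, IsC0Semigroup (T t) ∧ IsGenerator (A t) (T t))
    (hTtil : ∀ t ∈ Set.Icc (0 : ℝ) 1,
      IsC0Semigroup (Ttil t) ∧ IsGenerator (A (1 - t)).adjoint (Ttil t))
    (U Util : ℝ → ℝ → (H →L[ℂ] H))
    (hU : ∀ s t : ℝ, 0 ≤ s → s ≤ t → t ≤ 1 → ∀ x : H,
      Tendsto (fun n : ℕ => approxProd T t s n x) atTop (𝓝 (U t s x)))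
    (hUtil : ∀ s t : ℝ, 0 ≤ s → s ≤ t → t ≤ 1 → ∀ x : H,
      Tendsto (fun n : ℕ => approxProd Ttil t s n x) atTop (𝓝 (Util t s x)))
    (hbdd : ∀ s t : ℝ, 0 ≤ s → s ≤ t → t ≤ 1 → ∃ C : ℝ, ∀ n : ℕ,
      ‖approxProd T t s n‖ ≤ C) :
    ∀ s t : ℝ, 0 ≤ s → s ≤ t → t ≤ 1 →
      Util t s = ContinuousLinearMap.adjoint (U (1 - s) (1 - t)) := by

  intro s t hs hst ht1
  have hs1 : (1:ℝ) - s ∈ Set.Icc (0:ℝ) 1 := ⟨by linarith, by linarith⟩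
  have ht1' : (1:ℝ) - t ∈ Set.Icc (0:ℝ) 1 := ⟨by linarith, by linarith⟩
  -- the adjoint relation for semigroups
  have hπ : ∀ τ ∈ Set.Icc (0:ℝ) 1, ∀ r : ℝ, 0 ≤ r →
      Ttil τ r = ContinuousLinearMap.adjoint (T (1 - τ) r) := by
    intro τ hτ r hr
    have hτ' : (1:ℝ) - τ ∈ Set.Icc (0:ℝ) 1 := ⟨by linarith [hτ.2], by linarith [hτ.1]⟩
    exact sg_adjoint (hdense (1 - τ) hτ') (hT _ hτ').1 (hT _ hτ').2
      (hTtil τ hτ).1 (hTtil τ hτ).2 hr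
  set δ : ℕ → ℝ := fun n => (t - s) / (n : ℝ) with hδdef
  have hts : 0 ≤ t - s := by linarith
  have hδ0 : ∀ n, 0 ≤ δ n := fun n => div_nonneg hts (Nat.cast_nonneg n)
  have hδ1 : ∀ n, δ n ≤ 1 := by
    intro n
    cases n with
    | zero => simp [hδdef]
    | succ m =>
      have h1 : δ (m+1) ≤ t - s := by
        refine div_le_self hts ?_
        exact_mod_cast Nat.one_le_iff_ne_zero.mpr (Nat.succ_ne_zero m)
      linarith
  have hδlim : Filter.Tendsto δ Filter.atTop (𝓝 0) :=
    tendsto_const_div_atTop_nhds_zero_nat (t - s)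
  have hδwithin : Filter.Tendsto δ Filter.atTop (𝓝[Set.Ici (0:ℝ)] 0) :=
    tendsto_nhdsWithin_of_tendsto_nhds_of_eventually_within _ hδlim
      (Filter.Eventually.of_forall hδ0)
  ext x
  refine ext_inner_right ℂ (fun y => ?_)
  rw [ContinuousLinearMap.adjoint_inner_left]
  -- limit of the left-hand pairing
  have h2 : Filter.Tendsto (fun n => T (1-t) (δ n) y) Filter.atTop (𝓝 y) := by
    have hcw : ContinuousWithinAt (fun r => T (1-t) r y) (Set.Ici (0:ℝ)) 0 :=
      ((hT (1-t) ht1').1.2.2 y) 0 Set.self_mem_Ici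
    have := hcw.tendsto.comp hδwithin
    have h0 : T (1-t) 0 y = y := by rw [(hT (1-t) ht1').1.1]; rfl
    rwa [Function.comp_def, h0] at this
  have h1 : Filter.Tendsto (fun n => (inner ℂ (approxProd Ttil t s n x) (T (1-t) (δ n) y) : ℂ))
      Filter.atTop (𝓝 (inner ℂ (Util t s x) y)) :=
    (hUtil s t hs hst ht1 x).inner h2
  -- per-n identity (n ≥ 1)
  have hiden : ∀ n : ℕ, 1 ≤ n →
      (inner ℂ (approxProd Ttil t s n x) (T (1-t) (δ n) y) : ℂ)
        = inner ℂ x (T (1-s) (δ n) (approxProd T (1-s) (1-t) n y)) := by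
    intro n hn
    have hn' : (n:ℝ) ≠ 0 := Nat.cast_ne_zero.mpr (Nat.one_le_iff_ne_zero.mp hn)
    have hnδ : (n:ℝ) * δ n = t - s := by
      rw [hδdef]; field_simp
    have hmem : ∀ k : ℕ, k < n → s + (k:ℝ) * δ n ∈ Set.Icc (0:ℝ) 1 := by
      intro k hkn
      constructor
      · exact add_nonneg hs (mul_nonneg (Nat.cast_nonneg k) (hδ0 n))
      · have hk1 : (k:ℝ) * δ n ≤ (n:ℝ) * δ n :=
          mul_le_mul_of_nonneg_right (by exact_mod_cast hkn.le) (hδ0 n)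
        rw [hnδ] at hk1
        linarith
    have e0 : approxProd Ttil t s n = Rprod Ttil s (δ n) n := approxProd_eq_Rprod _ _ _ _
    have e1 : approxProd T (1-s) (1-t) n = Rprod T (1-t) (δ n) n := by
      have harg : ((1-s) - (1-t)) / (n:ℝ) = δ n := by rw [hδdef]; ring_nf
      rw [← harg]
      exact approxProd_eq_Rprod _ _ _ _
    rw [e0, Rprod_adjoint T Ttil hπ (hδ0 n) s n hmem,
      ContinuousLinearMap.adjoint_inner_left]
    congr 1
    have c_eq : (1:ℝ) - s + δ n - (n:ℝ) * δ n = 1 - t + δ n := by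
      rw [hnδ]; ring
    rw [c_eq]
    have key : (Rprod T (1 - t + δ n) (δ n) n).comp (T (1-t) (δ n))
        = (T (1-s) (δ n)).comp (Rprod T (1-t) (δ n) n) := by
      rw [← Rprod_succ', Rprod_succ]
      congr 2
      rw [hnδ]; ring
    have := congrArg (fun (B : H →L[ℂ] H) => B y) key
    simp only [ContinuousLinearMap.comp_apply] at this
    rw [e1, this]
  -- limit of the right-hand side
  have h3 : Filter.Tendsto (fun n => T (1-s) (δ n) (approxProd T (1-s) (1-t) n y))
      Filter.atTop (𝓝 (U (1-s) (1-t) y)) := by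
    obtain ⟨C, hC0, hC⟩ := sg_bound (hT (1-s) hs1).1 1
    have hq := hU (1-t) (1-s) (by linarith) (by linarith) (by linarith) y
    rw [tendsto_iff_norm_sub_tendsto_zero]
    refine squeeze_zero' (g := fun n => C * ‖approxProd T (1-s) (1-t) n y - U (1-s) (1-t) y‖
        + ‖T (1-s) (δ n) (U (1-s) (1-t) y) - U (1-s) (1-t) y‖)
      (Filter.Eventually.of_forall fun n => norm_nonneg _) ?_ ?_
    · refine Filter.Eventually.of_forall fun n => ?_
      calc ‖T (1-s) (δ n) (approxProd T (1-s) (1-t) n y) - U (1-s) (1-t) y‖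
          = ‖T (1-s) (δ n) (approxProd T (1-s) (1-t) n y - U (1-s) (1-t) y)
              + (T (1-s) (δ n) (U (1-s) (1-t) y) - U (1-s) (1-t) y)‖ := by
            rw [map_sub]; abel_nf
        _ ≤ ‖T (1-s) (δ n) (approxProd T (1-s) (1-t) n y - U (1-s) (1-t) y)‖
              + ‖T (1-s) (δ n) (U (1-s) (1-t) y) - U (1-s) (1-t) y‖ := norm_add_le _ _
        _ ≤ C * ‖approxProd T (1-s) (1-t) n y - U (1-s) (1-t) y‖
              + ‖T (1-s) (δ n) (U (1-s) (1-t) y) - U (1-s) (1-t) y‖ := by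
            gcongr
            exact ((T (1-s) (δ n)).le_opNorm _).trans
              (mul_le_mul_of_nonneg_right (hC (δ n) ⟨hδ0 n, hδ1 n⟩) (norm_nonneg _))
    · have t1 : Filter.Tendsto
          (fun n => C * ‖approxProd T (1-s) (1-t) n y - U (1-s) (1-t) y‖)
          Filter.atTop (𝓝 0) := by
        have := ((hq.sub (tendsto_const_nhds (x := U (1-s) (1-t) y))).norm).const_mul C
        simpa using this
      have t2 : Filter.Tendsto
          (fun n => ‖T (1-s) (δ n) (U (1-s) (1-t) y) - U (1-s) (1-t) y‖)
          Filter.atTop (𝓝 0) := by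
        have hcw : ContinuousWithinAt (fun r => T (1-s) r (U (1-s) (1-t) y))
            (Set.Ici (0:ℝ)) 0 := ((hT (1-s) hs1).1.2.2 _) 0 Set.self_mem_Ici
        have hcomp := hcw.tendsto.comp hδwithin
        have h0 : T (1-s) 0 (U (1-s) (1-t) y) = U (1-s) (1-t) y := by
          rw [(hT (1-s) hs1).1.1]; rfl
        rw [Function.comp_def, h0] at hcomp
        simpa using (hcomp.sub (tendsto_const_nhds (x := U (1-s) (1-t) y))).norm
      simpa using t1.add t2
  have h4 : Filter.Tendsto
      (fun n => (inner ℂ x (T (1-s) (δ n) (approxProd T (1-s) (1-t) n y)) : ℂ))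
      Filter.atTop (𝓝 (inner ℂ x (U (1-s) (1-t) y))) :=
    (tendsto_const_nhds (x := x)).inner h3
  have h1' : Filter.Tendsto
      (fun n => (inner ℂ x (T (1-s) (δ n) (approxProd T (1-s) (1-t) n y)) : ℂ))
      Filter.atTop (𝓝 (inner ℂ (Util t s x) y)) := by
    refine h1.congr' ?_
    filter_upwards [Filter.eventually_ge_atTop 1] with n hn
    exact hiden n hn
  exact tendsto_nhds_unique h1' h4
end
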